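/- arXiv:1804.02710 — 3 statements merged into one kernel-verified Lean document; each statement's English description precedes it below -/
import Mathlib

section
/- Let \lambda > 0, let 1 \le m \le N be integers, and let D be a real number with D \ge N - m + 1. Define f_{R_m}(r) = 2\lambda\pi r (1 - e^{-\lambda\pi r^2})^{m-1} (e^{-\lambda\pi r^2})^{N-m+1} / B(N-m+1, m) for r \ge 0, where B is the Beta function. Then the integral \int_0^\infty e^{\pi\lambda D r^2} f_{R_m}(r) \, dr diverges (equals +\infty). Together with the convergent case, this shows: the mean local delay M_{-1,(m)} = \int_0^\infty e^{\pi\lambda D_{1,m} r^2} f_{R_m}(r) \, dr is finite and equals B(N-m-D_{1,m}+1, m)/B(N-m+1, m) if D_{1,m} < N-m+1, and is infinite if D_{1,m} \ge N-m+1. -/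
/-!
Substituting `u = exp (-λπ r²)`, so that `du = -2λπ r u dr` and `exp (πλD r²) = u^(-D)`,
turns the integral into `∫₀¹ u^(N-m-D) (1-u)^(m-1) du / B(N-m+1, m)`. This Beta integral is
finite exactly when `N - m - D > -1`, where it equals `B(N-m-D+1, m)` by
`Γ(a)Γ(b) = Γ(a+b) B(a,b)`; otherwise the singularity of `u^(N-m-D)` at `0` is not integrable.
-/

open MeasureTheory Real
open scoped ENNReal

/-- The Beta function `B(a,b) = Γ(a)Γ(b)/Γ(a+b)`. -/
noncomputable def betaFun (a b : ℝ) : ℝ := Real.Gamma a * Real.Gamma b / Real.Gamma (a + b)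

open Set

lemma betaFun_pos {a b : ℝ} (ha : 0 < a) (hb : 0 < b) : 0 < betaFun a b :=
  div_pos (mul_pos (Gamma_pos_of_pos ha) (Gamma_pos_of_pos hb)) (Gamma_pos_of_pos (by linarith))

section BetaIntegrand

variable {p : ℝ} (n : ℕ)

lemma integral_Ioo_rpow_mul_one_sub_pow (hp : -1 < p) :
    ∫ x in Ioo (0 : ℝ) 1, x ^ p * (1 - x) ^ n = betaFun (p + 1) (n + 1) := by
  have hs : 0 < (((p + 1 : ℝ)) : ℂ).re := by rw [Complex.ofReal_re]; linarith
  have ht : 0 < (((n + 1 : ℝ)) : ℂ).re := by rw [Complex.ofReal_re]; positivity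
  have hbeta : Complex.betaIntegral (p + 1 : ℝ) (n + 1 : ℝ)
      = ((∫ x in Ioo (0 : ℝ) 1, x ^ p * (1 - x) ^ n : ℝ) : ℂ) := by
    rw [Complex.betaIntegral, ← integral_Ioc_eq_integral_Ioo,
      ← intervalIntegral.integral_of_le zero_le_one, ← intervalIntegral.integral_ofReal]
    refine intervalIntegral.integral_congr fun x hx => ?_
    rw [uIcc_of_le zero_le_one] at hx
    simp only [Complex.ofReal_add, Complex.ofReal_one, Complex.ofReal_natCast,
      add_sub_cancel_right, Complex.cpow_natCast, Complex.ofReal_mul, Complex.ofReal_pow,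
      Complex.ofReal_sub, Complex.ofReal_cpow hx.1]
  have hG : Gamma (p + 1 + (n + 1)) ≠ 0 := (Gamma_pos_of_pos (by positivity)).ne'
  have key := Complex.Gamma_mul_Gamma_eq_betaIntegral hs ht
  rw [hbeta, ← Complex.ofReal_add, Complex.Gamma_ofReal, Complex.Gamma_ofReal,
    Complex.Gamma_ofReal] at key
  rw [betaFun, eq_div_iff hG, mul_comm]
  exact_mod_cast key.symm

variable (p) in
lemma rpow_mul_one_sub_pow_nonneg {x : ℝ} (hx : x ∈ Ioo (0 : ℝ) 1) :
    0 ≤ x ^ p * (1 - x) ^ n :=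
  mul_nonneg (rpow_nonneg hx.1.le p) (pow_nonneg (by linarith [hx.2]) n)

variable (p) in
lemma integrableOn_Ioo_rpow_mul_one_sub_pow_iff :
    IntegrableOn (fun x : ℝ => x ^ p * (1 - x) ^ n) (Ioo 0 1) ↔ -1 < p := by
  constructor
  · intro h
    -- on `(0, 1/2)` the factor `(1 - x)^n` is at least `2^(-n)`
    have hhalf : IntegrableOn (fun x : ℝ => x ^ p) (Ioo 0 (1 / 2)) := by
      refine Integrable.mono'
        ((h.mono_set (Ioo_subset_Ioo_right (by norm_num))).const_mul (2 ^ n))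
        ((continuousOn_id.rpow_const fun _ hx => Or.inl (ne_of_gt hx.1)).aestronglyMeasurable
          measurableSet_Ioo) ((ae_restrict_iff' measurableSet_Ioo).2 (ae_of_all _ fun x hx => ?_))
      have hxp : 0 ≤ x ^ p := rpow_nonneg hx.1.le p
      have hpow : 1 ≤ 2 ^ n * (1 - x) ^ n := by
        rw [← mul_pow]; exact one_le_pow₀ (by linarith [hx.2])
      rw [norm_of_nonneg hxp]
      nlinarith
    exact (intervalIntegral.integrableOn_Ioo_rpow_iff (by norm_num)).1 hhalf
  · intro hp
    refine ((intervalIntegral.integrableOn_Ioo_rpow_iff one_pos).2 hp).mul_bdd (c := 1)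
      ((continuous_const.sub continuous_id).pow n).aestronglyMeasurable
      ((ae_restrict_iff' measurableSet_Ioo).2 (ae_of_all _ fun x hx => ?_))
    rw [norm_pow, norm_of_nonneg (by linarith [hx.2])]
    exact pow_le_one₀ (by linarith [hx.2]) (by linarith [hx.1])

variable (p) in
lemma lintegral_Ioo_rpow_mul_one_sub_pow_ne_top_iff :
    ∫⁻ x in Ioo (0 : ℝ) 1, ENNReal.ofReal (x ^ p * (1 - x) ^ n) ≠ ∞ ↔ -1 < p := by
  have hmeas :
      AEStronglyMeasurable (fun x : ℝ => x ^ p * (1 - x) ^ n) (volume.restrict (Ioo 0 1)) :=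
    ((continuousOn_id.rpow_const fun _ hx => Or.inl (ne_of_gt hx.1)).mul
      (by fun_prop)).aestronglyMeasurable measurableSet_Ioo
  rw [lintegral_ofReal_ne_top_iff_integrable hmeas
    ((ae_restrict_iff' measurableSet_Ioo).2
      (ae_of_all _ fun _ => rpow_mul_one_sub_pow_nonneg p n)),
    ← IntegrableOn, integrableOn_Ioo_rpow_mul_one_sub_pow_iff]

lemma lintegral_Ioo_rpow_mul_one_sub_pow (hp : -1 < p) :
    ∫⁻ x in Ioo (0 : ℝ) 1, ENNReal.ofReal (x ^ p * (1 - x) ^ n) =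
      ENNReal.ofReal (betaFun (p + 1) (n + 1)) := by
  rw [← integral_Ioo_rpow_mul_one_sub_pow n hp, ofReal_integral_eq_lintegral_ofReal
    ((integrableOn_Ioo_rpow_mul_one_sub_pow_iff p n).2 hp)
    ((ae_restrict_iff' measurableSet_Ioo).2
      (ae_of_all _ fun _ => rpow_mul_one_sub_pow_nonneg p n))]

end BetaIntegrand

lemma lintegral_ofReal_div_const {α : Type*} [MeasurableSpace α] (μ : Measure α)
    (f : α → ℝ) {b : ℝ} (hb : 0 < b) :
    ∫⁻ x, ENNReal.ofReal (f x / b) ∂μ =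
      (∫⁻ x, ENNReal.ofReal (f x) ∂μ) / ENNReal.ofReal b := by
  simp_rw [ENNReal.ofReal_div_of_pos hb, div_eq_mul_inv]
  exact lintegral_mul_const' _ _ (ENNReal.inv_ne_top.2 (ENNReal.ofReal_pos.2 hb).ne')

section GaussianSubstitution

variable {c : ℝ} (hc : 0 < c)
include hc

lemma strictAntiOn_exp_neg_mul_sq : StrictAntiOn (fun r : ℝ => exp (-c * r ^ 2)) (Ioi 0) :=
  fun x hx y _ hxy => exp_lt_exp.2 <| by nlinarith [mul_pos hc (add_pos hx (hx.trans hxy))]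

lemma image_exp_neg_mul_sq_Ioi : (fun r : ℝ => exp (-c * r ^ 2)) '' Ioi 0 = Ioo 0 1 := by
  ext u
  constructor
  · rintro ⟨r, hr, rfl⟩
    exact ⟨exp_pos _, exp_lt_one_iff.2 (by nlinarith [mul_pos hc (pow_pos (mem_Ioi.1 hr) 2)])⟩
  · rintro ⟨hu0, hu1⟩
    have hq : 0 < -log u / c := div_pos (neg_pos.2 (log_neg hu0 hu1)) hc
    refine ⟨√(-log u / c), sqrt_pos.2 hq, ?_⟩
    dsimp only
    rw [sq_sqrt hq.le, show -c * (-log u / c) = log u by field_simp, exp_log hu0]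

lemma lintegral_Ioi_exp_neg_mul_sq_subst (g : ℝ → ℝ≥0∞) :
    ∫⁻ r in Ioi 0, ENNReal.ofReal (2 * c * r * exp (-c * r ^ 2)) * g (exp (-c * r ^ 2)) =
      ∫⁻ u in Ioo 0 1, g u := by
  have hderiv : ∀ r ∈ Ioi (0 : ℝ), HasDerivWithinAt (fun r : ℝ => exp (-c * r ^ 2))
      (-(2 * c * r * exp (-c * r ^ 2))) (Ioi 0) r := fun r _ =>
    (((hasDerivAt_pow 2 r).const_mul (-c)).exp.congr_deriv (by push_cast; ring)).hasDerivWithinAt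
  rw [← image_exp_neg_mul_sq_Ioi hc, lintegral_image_eq_lintegral_abs_deriv_mul measurableSet_Ioi
    hderiv (strictAntiOn_exp_neg_mul_sq hc).injOn]
  refine setLIntegral_congr_fun measurableSet_Ioi fun r hr => ?_
  rw [abs_neg, abs_of_pos (by have := mem_Ioi.1 hr; positivity)]

end GaussianSubstitution

lemma exp_mul_mul_exp_neg_pow_succ (y D : ℝ) (k : ℕ) :
    exp (D * y) * exp (-y) ^ (k + 1) = exp (-y) * exp (-y) ^ ((k : ℝ) - D) := by
  rw [← rpow_natCast, ← exp_mul, ← exp_mul, ← exp_add, ← exp_add]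
  push_cast
  ring_nf

lemma lintegral_Ioi_exp_mul_rankDensity {lam : ℝ} (hlam : 0 < lam) (n k : ℕ) (D B : ℝ) :
    ∫⁻ r in Ioi (0 : ℝ), ENNReal.ofReal (exp (π * lam * D * r ^ 2) *
        (2 * lam * π * r * (1 - exp (-lam * π * r ^ 2)) ^ n *
          exp (-lam * π * r ^ 2) ^ (k + 1) / B)) =
      ∫⁻ u in Ioo 0 1, ENNReal.ofReal (u ^ ((k : ℝ) - D) * (1 - u) ^ n / B) := by
  rw [← lintegral_Ioi_exp_neg_mul_sq_subst (mul_pos hlam pi_pos)]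
  refine setLIntegral_congr_fun measurableSet_Ioi fun r hr => ?_
  have hr : 0 < r := hr
  rw [← ENNReal.ofReal_mul (by positivity)]
  congr 1
  rw [show -lam * π * r ^ 2 = -(lam * π * r ^ 2) by ring,
    show -(lam * π) * r ^ 2 = -(lam * π * r ^ 2) by ring,
    show π * lam * D * r ^ 2 = D * (lam * π * r ^ 2) by ring]
  linear_combination (2 * lam * π * r * (1 - exp (-(lam * π * r ^ 2))) ^ n / B) *
    exp_mul_mul_exp_neg_pow_succ (lam * π * r ^ 2) D k

/-- Mean local delay of the `m`-th rank downlink NOMA user: the integral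
`∫₀^∞ e^(πλD r²) f_{R_m}(r) dr` (stated as a Lebesgue integral so that it may be infinite)
diverges when `D ≥ N - m + 1`, and equals `B(N-m-D+1, m)/B(N-m+1, m)` when `D < N - m + 1`. -/
theorem downlink_mean_local_delay_finite_iff
    (lam : ℝ) (hlam : 0 < lam) (m N : ℕ) (hm : 1 ≤ m) (hmN : m ≤ N) (D : ℝ) :
    (D ≥ (N : ℝ) - m + 1 →
      (∫⁻ r in Set.Ioi (0 : ℝ),
          ENNReal.ofReal (Real.exp (π * lam * D * r ^ 2) *
            (2 * lam * π * r * (1 - Real.exp (-lam * π * r ^ 2)) ^ (m - 1) *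
                (Real.exp (-lam * π * r ^ 2)) ^ (N - m + 1) /
              betaFun ((N : ℝ) - m + 1) m))) = ⊤) ∧
    (D < (N : ℝ) - m + 1 →
      (∫⁻ r in Set.Ioi (0 : ℝ),
          ENNReal.ofReal (Real.exp (π * lam * D * r ^ 2) *
            (2 * lam * π * r * (1 - Real.exp (-lam * π * r ^ 2)) ^ (m - 1) *
                (Real.exp (-lam * π * r ^ 2)) ^ (N - m + 1) /
              betaFun ((N : ℝ) - m + 1) m))) =
        ENNReal.ofReal (betaFun ((N : ℝ) - m - D + 1) m / betaFun ((N : ℝ) - m + 1) m)) := by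
  obtain ⟨n, rfl⟩ : ∃ n, m = n + 1 := ⟨m - 1, by omega⟩
  obtain ⟨k, rfl⟩ := Nat.exists_eq_add_of_le hmN
  have hk : ((n + 1 + k : ℕ) : ℝ) - ((n + 1 : ℕ) : ℝ) = k := by push_cast; ring
  simp only [Nat.add_sub_cancel, Nat.add_sub_cancel_left, hk]
  have hB : 0 < betaFun (k + 1) ((n + 1 : ℕ) : ℝ) := betaFun_pos (by positivity) (by positivity)
  rw [lintegral_Ioi_exp_mul_rankDensity hlam, lintegral_ofReal_div_const _ _ hB]
  refine ⟨fun hD => ?_, fun hD => ?_⟩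
  · rw [not_ne_iff.1 ((lintegral_Ioo_rpow_mul_one_sub_pow_ne_top_iff _ n).not.2 (by linarith)),
      ENNReal.top_div_of_ne_top ENNReal.ofReal_ne_top]
  · rw [lintegral_Ioo_rpow_mul_one_sub_pow n (by linarith), ← ENNReal.ofReal_div_of_pos hB,
      Nat.cast_succ]
end

section
/- Let c > 0, \alpha > 2, R > 0, and let b \ge 1 be an integer; set \delta = 2/\alpha. Then 2 \int_R^\infty [ 1 - (1 + c R^\alpha r^{-\alpha})^{-b} ] \, r \, dr = R^2 \delta \sum_{k=1}^{b} \binom{b}{k} (-1)^{k+1} c^k \int_0^1 u^{k-\delta-1} (1 + c u)^{-k} \, du. -/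
/-!
The substitution `r = R u^(-1/α)` maps `(0, 1)` onto `(R, ∞)` and turns `c R^α r^(-α)` into `c u`,
so the left side becomes `R² δ ∫₀¹ u^(-δ-1) (1 - (1 + c u)^(-b)) du`. Writing
`(1 + c u)⁻¹ = 1 - c u / (1 + c u)` and expanding `1 - (1 - y)^b` binomially gives the sum; each
term is integrable on `(0, 1)` because `k - δ - 1 > -1`.
-/

open MeasureTheory Real Finset

theorem image_mul_rpow_Ioo_zero_one {R e : ℝ} (hR : 0 < R) (he : e < 0) :
    (fun u ↦ R * u ^ e) '' Set.Ioo 0 1 = Set.Ioi R := by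
  ext r
  constructor
  · rintro ⟨u, ⟨hu0, hu1⟩, rfl⟩
    exact lt_mul_of_one_lt_right hR (one_lt_rpow_of_pos_of_lt_one_of_neg hu0 hu1 he)
  · intro (hr : R < r)
    have hrR : 1 < r / R := (one_lt_div hR).mpr hr
    refine ⟨(r / R) ^ e⁻¹,
      ⟨by positivity, rpow_lt_one_of_one_lt_of_neg hrR (inv_lt_zero.mpr he)⟩, ?_⟩
    change R * ((r / R) ^ e⁻¹) ^ e = r
    rw [← rpow_mul (by positivity), inv_mul_cancel₀ he.ne, rpow_one, mul_div_cancel₀ _ hR.ne']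

theorem setIntegral_Ioi_eq_setIntegral_Ioo_mul_rpow {E : Type*} [NormedAddCommGroup E]
    [NormedSpace ℝ E] {R e : ℝ} (hR : 0 < R) (he : e < 0) (g : ℝ → E) :
    ∫ r in Set.Ioi R, g r = ∫ u in Set.Ioo 0 1, (-(R * e) * u ^ (e - 1)) • g (R * u ^ e) := by
  have hderiv : ∀ u ∈ Set.Ioo (0 : ℝ) 1,
      HasDerivWithinAt (fun u ↦ R * u ^ e) (R * (e * u ^ (e - 1))) (Set.Ioo 0 1) u :=
    fun u hu ↦ ((hasDerivAt_rpow_const (Or.inl hu.1.ne')).const_mul R).hasDerivWithinAt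
  have hinj : Set.InjOn (fun u ↦ R * u ^ e) (Set.Ioo 0 1) := fun u hu v hv huv ↦
    rpow_left_injOn he.ne hu.1.le hv.1.le (mul_left_cancel₀ hR.ne' huv)
  rw [← image_mul_rpow_Ioo_zero_one hR he,
    integral_image_eq_integral_abs_deriv_smul measurableSet_Ioo hderiv hinj]
  refine setIntegral_congr_fun measurableSet_Ioo fun u hu ↦ ?_
  rw [← mul_assoc, abs_mul, abs_of_neg (mul_neg_of_pos_of_neg hR he),
    abs_of_pos (rpow_pos_of_pos hu.1 _)]

theorem one_sub_one_sub_pow_eq_sum {A : Type*} [CommRing A] (y : A) (b : ℕ) :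
    1 - (1 - y) ^ b = ∑ k ∈ Icc 1 b, (b.choose k : A) * (-1) ^ (k + 1) * y ^ k := by
  rw [sub_eq_neg_add 1 y, add_pow, range_eq_Ico, sum_eq_sum_Ico_succ_bot b.succ_pos, zero_add,
    Nat.succ_eq_add_one, Ico_add_one_right_eq_Icc]
  simp only [pow_zero, one_pow, Nat.choose_zero_right, Nat.cast_one, mul_one, sub_add_cancel_left,
    ← sum_neg_distrib]
  refine sum_congr rfl fun k _ ↦ ?_
  rw [neg_pow, pow_succ]
  ring

theorem rpow_mul_one_sub_inv_one_add_mul_pow_eq_sum {c u : ℝ} (hc : 0 ≤ c) (hu : 0 < u)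
    (s : ℝ) (b : ℕ) :
    u ^ s * (1 - ((1 + c * u) ^ b)⁻¹) =
      ∑ k ∈ Icc 1 b, (b.choose k : ℝ) * (-1) ^ (k + 1) * c ^ k *
        (u ^ ((k : ℝ) + s) * ((1 + c * u) ^ k)⁻¹) := by
  have hpos : 0 < 1 + c * u := by positivity
  have hinv : (1 + c * u)⁻¹ = 1 - c * u / (1 + c * u) := by field_simp; ring
  rw [← inv_pow, hinv, one_sub_one_sub_pow_eq_sum, mul_sum]
  refine sum_congr rfl fun k _ ↦ ?_
  rw [rpow_add hu, rpow_natCast, div_pow, mul_pow]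
  ring

theorem integrableOn_rpow_mul_inv_one_add_mul_pow {s c : ℝ} (hs : -1 < s) (hc : 0 ≤ c) (k : ℕ) :
    IntegrableOn (fun u ↦ u ^ s * ((1 + c * u) ^ k)⁻¹) (Set.Ioo 0 1) := by
  have hbound : ∀ᵐ u ∂volume.restrict (Set.Ioo (0 : ℝ) 1), ‖((1 + c * u) ^ k)⁻¹‖ ≤ 1 := by
    filter_upwards [ae_restrict_mem measurableSet_Ioo] with u hu
    have : 1 ≤ 1 + c * u := le_add_of_nonneg_right (mul_nonneg hc hu.1.le)
    rw [norm_inv, norm_pow, Real.norm_of_nonneg (by positivity)]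
    exact inv_le_one_of_one_le₀ (one_le_pow₀ this)
  have hmeas : AEStronglyMeasurable (fun u : ℝ ↦ ((1 + c * u) ^ k)⁻¹)
      (volume.restrict (Set.Ioo 0 1)) := by fun_prop
  rw [IntegrableOn]
  simpa only [mul_comm] using
    ((intervalIntegral.integrableOn_Ioo_rpow_iff one_pos).mpr hs).bdd_mul hmeas hbound

theorem mul_rpow_neg_inv_rpow_neg {R u α : ℝ} (hR : 0 < R) (hu : 0 < u) (hα : α ≠ 0) :
    (R * u ^ (-α⁻¹)) ^ (-α) = R ^ (-α) * u := by
  rw [mul_rpow hR.le (rpow_nonneg hu.le _), ← rpow_mul hu.le, neg_mul_neg, inv_mul_cancel₀ hα,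
    rpow_one]

theorem moment_integrand_comp_mul_rpow_neg_inv {c α R u : ℝ} (hc : 0 ≤ c) (hα : 0 < α)
    (hR : 0 < R) (hu : 0 < u) (b : ℕ) :
    (-(R * -α⁻¹) * u ^ (-α⁻¹ - 1)) •
        ((1 - ((1 + c * R ^ α * (R * u ^ (-α⁻¹)) ^ (-α)) ^ b)⁻¹) * (R * u ^ (-α⁻¹))) =
      R ^ 2 * α⁻¹ * ∑ k ∈ Icc 1 b, (b.choose k : ℝ) * (-1) ^ (k + 1) * c ^ k *
        (u ^ ((k : ℝ) - 2 / α - 1) * ((1 + c * u) ^ k)⁻¹) := by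
  have hpow : u ^ (-α⁻¹ - 1) * u ^ (-α⁻¹) = u ^ (-(2 / α) - 1) := by
    rw [← rpow_add hu]; ring_nf
  have hcu : c * R ^ α * (R ^ (-α) * u) = c * u := by
    rw [rpow_neg hR.le]; field_simp
  have hexp (k : ℕ) : (k : ℝ) - 2 / α - 1 = k + (-(2 / α) - 1) := by ring
  simp_rw [mul_rpow_neg_inv_rpow_neg hR hu hα.ne', hcu, hexp,
    ← rpow_mul_one_sub_inv_one_add_mul_pow_eq_sum hc hu, ← hpow, smul_eq_mul]
  ring

theorem positive_moment_integral_eval_general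
    (c α R : ℝ) (b : ℕ) (hc : 0 < c) (hα : 2 < α) (hR : 0 < R) :
    2 * (∫ r in Set.Ioi R, (1 - ((1 + c * R ^ α * r ^ (-α)) ^ b)⁻¹) * r) =
      R ^ 2 * (2 / α) * ∑ k ∈ Finset.Icc 1 b,
        (b.choose k : ℝ) * (-1 : ℝ) ^ (k + 1) * c ^ k *
          ∫ u in Set.Ioo (0 : ℝ) 1, u ^ ((k : ℝ) - 2 / α - 1) * ((1 + c * u) ^ k)⁻¹ := by
  have hα0 : 0 < α := by linarith
  have hint : ∀ k ∈ Icc 1 b, IntegrableOn (fun u ↦ (b.choose k : ℝ) * (-1) ^ (k + 1) * c ^ k *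
      (u ^ ((k : ℝ) - 2 / α - 1) * ((1 + c * u) ^ k)⁻¹)) (Set.Ioo 0 1) := by
    intro k hk
    have hk : (1 : ℝ) ≤ k := by exact_mod_cast (mem_Icc.mp hk).1
    have hδ : 2 / α < 1 := (div_lt_one hα0).mpr hα
    exact (integrableOn_rpow_mul_inv_one_add_mul_pow (by linarith) hc.le k).const_mul _
  rw [setIntegral_Ioi_eq_setIntegral_Ioo_mul_rpow hR (neg_neg_of_pos (inv_pos.mpr hα0)),
    setIntegral_congr_fun measurableSet_Ioo fun u hu ↦
      moment_integrand_comp_mul_rpow_neg_inv hc.le hα0 hR hu.1 b, integral_const_mul,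
    integral_finsetSum _ hint]
  simp only [integral_const_mul, mul_sum]
  refine sum_congr rfl fun k _ ↦ ?_
  ring

/-- For `c > 0`, `α > 2`, `R > 0`, integer `b ≥ 1` and `δ = 2/α`:
`2 ∫_R^∞ [1 - (1 + c R^α r^(-α))^(-b)] r dr
  = R² δ ∑_{k=1}^b C(b,k) (-1)^(k+1) c^k ∫₀¹ u^(k-δ-1) (1 + c u)^(-k) du`. -/
theorem positive_moment_integral_eval
    (c α R : ℝ) (b : ℕ) (hc : 0 < c) (hα : 2 < α) (hR : 0 < R) (hb : 1 ≤ b) :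
    2 * (∫ r in Set.Ioi R, (1 - ((1 + c * R ^ α * r ^ (-α)) ^ b)⁻¹) * r) =
      R ^ 2 * (2 / α) * ∑ k ∈ Finset.Icc 1 b,
        (b.choose k : ℝ) * (-1 : ℝ) ^ (k + 1) * c ^ k *
          ∫ u in Set.Ioo (0 : ℝ) 1, u ^ ((k : ℝ) - 2 / α - 1) * ((1 + c * u) ^ k)⁻¹ :=
  positive_moment_integral_eval_general c α R b hc hα hR
end

section
/- Let \alpha > 2, \delta = 2/\alpha, \theta > 0 and c^* > 0, and suppose \theta < c^* \min\{1/2, 1/(1+\theta)\}. Define A(c) = \delta \int_0^1 c u^{-\delta}/(1+cu) du, c_2(\beta_1) = \theta/(1 - \beta_1(1+\theta)), M(\beta_1) = 2/(2 + 3 A(c_2(\beta_1)) + A(c_2(\beta_1))^2), and the feasible set S = \{\beta_1 : \theta/c^* < \beta_1 < \min\{1/2, 1/(1+\theta)\}\}. Then S is nonempty, M is strictly decreasing on S, and \sup_{\beta_1 \in S} M(\beta_1) = M(\theta/c^*); i.e., the optimal power allocation is \beta_1^* = \theta/c^* and \beta_2^* = 1 - \beta_1^*. -/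
open MeasureTheory

/-- `A(c) = δ ∫₀¹ c u^(-δ)/(1 + c u) du` with `δ = 2/α`. -/
noncomputable def Afun (α c : ℝ) : ℝ :=
  (2 / α) * ∫ u in Set.Ioo (0 : ℝ) 1, c * u ^ (-(2 / α)) / (1 + c * u)

/-- `c₂(β₁) = θ/(1 - β₁(1+θ))`. -/
noncomputable def c2fun (θ β1 : ℝ) : ℝ := θ / (1 - β1 * (1 + θ))

/-- Mean success probability of the 2nd-rank user in two-user downlink NOMA. -/
noncomputable def M2fun (α θ β1 : ℝ) : ℝ :=
  2 / (2 + 3 * Afun α (c2fun θ β1) + (Afun α (c2fun θ β1)) ^ 2)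

open Set
open scoped ENNReal

section Aux
variable {α : ℝ}

lemma hδpos (hα : 2 < α) : 0 < 2 / α := by positivity
lemma hδlt (hα : 2 < α) : 2 / α < 1 := by
  rw [div_lt_one (by linarith)]; linarith

lemma int_rpow (hα : 2 < α) : IntegrableOn (fun u : ℝ => u ^ (-(2/α))) (Set.Ioo 0 1) := by
  have h1 : IntervalIntegrable (fun u : ℝ => u ^ (-(2/α))) volume 0 1 :=
    intervalIntegral.intervalIntegrable_rpow' (by have := hδlt hα; linarith)
  exact ((intervalIntegrable_iff_integrableOn_Ioc_of_le (by norm_num : (0:ℝ) ≤ 1)).1 h1).mono_set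
    Ioo_subset_Ioc_self

lemma contOn_g (hc : 0 ≤ c) :
    ContinuousOn (fun u : ℝ => c * u ^ (-(2/α)) / (1 + c * u)) (Set.Ioo 0 1) := by
  apply ContinuousOn.div
  · exact continuousOn_const.mul (fun u hu =>
      (Real.continuousAt_rpow_const u _ (Or.inl hu.1.ne')).continuousWithinAt)
  · fun_prop
  · intro u hu
    have : 0 ≤ c * u := mul_nonneg hc hu.1.le
    positivity

lemma int_g (hα : 2 < α) (hc : 0 ≤ c) :
    IntegrableOn (fun u : ℝ => c * u ^ (-(2/α)) / (1 + c * u)) (Set.Ioo 0 1) := by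
  apply Integrable.mono' ((int_rpow hα).const_mul c)
    ((contOn_g hc).aestronglyMeasurable measurableSet_Ioo)
  filter_upwards [ae_restrict_mem measurableSet_Ioo] with u hu
  have hu0 : (0:ℝ) < u := hu.1
  have h1 : (0:ℝ) ≤ u ^ (-(2/α)) := (Real.rpow_pos_of_pos hu0 _).le
  have hcu : (0:ℝ) ≤ c * u := mul_nonneg hc hu0.le
  rw [Real.norm_eq_abs, abs_of_nonneg (by positivity)]
  calc c * u ^ (-(2/α)) / (1 + c * u) ≤ c * u ^ (-(2/α)) / 1 := by
        apply div_le_div_of_nonneg_left (by positivity) one_pos; linarith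
    _ = c * u ^ (-(2/α)) := by ring

lemma diff_eq {c c' u : ℝ} (hc : 0 < c) (hc' : 0 < c') (hu : 0 < u) :
    c' * u ^ (-(2/α)) / (1 + c' * u) - c * u ^ (-(2/α)) / (1 + c * u)
      = (c' - c) * u ^ (-(2/α)) / ((1 + c * u) * (1 + c' * u)) := by
  have h1 : (0:ℝ) < 1 + c * u := by nlinarith
  have h2 : (0:ℝ) < 1 + c' * u := by nlinarith
  field_simp
  ring

lemma Afun_nonneg (hα : 2 < α) (hc : 0 ≤ c) : 0 ≤ Afun α c := by
  unfold Afun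
  apply mul_nonneg (by positivity)
  apply setIntegral_nonneg measurableSet_Ioo
  intro u hu
  have h1 : (0:ℝ) ≤ u ^ (-(2/α)) := (Real.rpow_pos_of_pos hu.1 _).le
  have : (0:ℝ) ≤ c * u := mul_nonneg hc hu.1.le
  positivity

lemma Afun_strictMono (hα : 2 < α) {c c' : ℝ} (hc : 0 < c) (hcc : c < c') :
    Afun α c < Afun α c' := by
  have hc' : 0 < c' := hc.trans hcc
  unfold Afun
  have hint : (∫ u in Ioo (0:ℝ) 1, c' * u ^ (-(2/α)) / (1 + c' * u))
      - (∫ u in Ioo (0:ℝ) 1, c * u ^ (-(2/α)) / (1 + c * u))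
      = ∫ u in Ioo (0:ℝ) 1,
          (c' * u ^ (-(2/α)) / (1 + c' * u) - c * u ^ (-(2/α)) / (1 + c * u)) :=
    (integral_sub (int_g hα hc'.le) (int_g hα hc.le)).symm
  have hpos : 0 < ∫ u in Ioo (0:ℝ) 1,
      (c' * u ^ (-(2/α)) / (1 + c' * u) - c * u ^ (-(2/α)) / (1 + c * u)) := by
    apply (setIntegral_pos_iff_support_of_nonneg_ae ?_ ?_).2
    · have : Ioo (0:ℝ) 1 ⊆ Function.support (fun u =>
          c' * u ^ (-(2/α)) / (1 + c' * u) - c * u ^ (-(2/α)) / (1 + c * u)) ∩ Ioo 0 1 := by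
        intro u hu
        refine ⟨?_, hu⟩
        have h1 : (0:ℝ) < u ^ (-(2/α)) := Real.rpow_pos_of_pos hu.1 _
        have h2 : (0:ℝ) < 1 + c * u := by nlinarith [hu.1]
        have h3 : (0:ℝ) < 1 + c' * u := by nlinarith [hu.1]
        rw [Function.mem_support, diff_eq hc hc' hu.1]
        exact ne_of_gt (div_pos (mul_pos (sub_pos.2 hcc) h1) (mul_pos h2 h3))
      calc (0:ℝ≥0∞) < volume (Ioo (0:ℝ) 1) := by simp
        _ ≤ _ := measure_mono this
    · filter_upwards [ae_restrict_mem measurableSet_Ioo] with u hu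
      have h1 : (0:ℝ) < u ^ (-(2/α)) := Real.rpow_pos_of_pos hu.1 _
      have h2 : (0:ℝ) < 1 + c * u := by nlinarith [hu.1]
      have h3 : (0:ℝ) < 1 + c' * u := by nlinarith [hu.1]
      rw [diff_eq hc hc' hu.1]
      exact le_of_lt (div_pos (mul_pos (sub_pos.2 hcc) h1) (mul_pos h2 h3))
    · exact (int_g hα hc'.le).sub (int_g hα hc.le)
  have hδ : (0:ℝ) < 2 / α := hδpos hα
  have : (∫ u in Ioo (0:ℝ) 1, c * u ^ (-(2/α)) / (1 + c * u))
      < ∫ u in Ioo (0:ℝ) 1, c' * u ^ (-(2/α)) / (1 + c' * u) := by linarith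
  exact mul_lt_mul_of_pos_left this hδ

lemma Afun_lip (hα : 2 < α) {c c' : ℝ} (hc : 0 < c) (hcc : c ≤ c') :
    Afun α c' - Afun α c
      ≤ (2/α) * (∫ u in Ioo (0:ℝ) 1, u ^ (-(2/α))) * (c' - c) := by
  have hc' : 0 < c' := lt_of_lt_of_le hc hcc
  have hmono : ∀ u ∈ Ioo (0:ℝ) 1,
      c' * u ^ (-(2/α)) / (1 + c' * u) - c * u ^ (-(2/α)) / (1 + c * u)
        ≤ (c' - c) * u ^ (-(2/α)) := by
    intro u hu
    have h1 : (0:ℝ) < u ^ (-(2/α)) := Real.rpow_pos_of_pos hu.1 _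
    have h2 : (0:ℝ) < 1 + c * u := by nlinarith [hu.1]
    have h3 : (0:ℝ) < 1 + c' * u := by nlinarith [hu.1]
    rw [diff_eq hc hc' hu.1]
    calc (c' - c) * u ^ (-(2/α)) / ((1 + c * u) * (1 + c' * u))
        ≤ (c' - c) * u ^ (-(2/α)) / 1 := by
          apply div_le_div_of_nonneg_left (mul_nonneg (by linarith) h1.le) one_pos
          nlinarith [mul_nonneg hc.le hu.1.le, mul_nonneg hc'.le hu.1.le,
            mul_nonneg (mul_nonneg hc.le hu.1.le) (mul_nonneg hc'.le hu.1.le)]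
      _ = (c' - c) * u ^ (-(2/α)) := by ring
  have hint : (∫ u in Ioo (0:ℝ) 1, c' * u ^ (-(2/α)) / (1 + c' * u))
      - (∫ u in Ioo (0:ℝ) 1, c * u ^ (-(2/α)) / (1 + c * u))
      = ∫ u in Ioo (0:ℝ) 1,
        (c' * u ^ (-(2/α)) / (1 + c' * u) - c * u ^ (-(2/α)) / (1 + c * u)) :=
    (integral_sub (int_g hα hc'.le) (int_g hα hc.le)).symm
  have hle : (∫ u in Ioo (0:ℝ) 1,
        (c' * u ^ (-(2/α)) / (1 + c' * u) - c * u ^ (-(2/α)) / (1 + c * u)))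
      ≤ ∫ u in Ioo (0:ℝ) 1, (c' - c) * u ^ (-(2/α)) := by
    apply setIntegral_mono_on ((int_g hα hc'.le).sub (int_g hα hc.le))
      ((int_rpow hα).const_mul _) measurableSet_Ioo hmono
  have heq : (∫ u in Ioo (0:ℝ) 1, (c' - c) * u ^ (-(2/α)))
      = (c' - c) * ∫ u in Ioo (0:ℝ) 1, u ^ (-(2/α)) := integral_const_mul _ _
  have hδ : (0:ℝ) < 2 / α := hδpos hα
  unfold Afun
  rw [← mul_sub]
  calc 2 / α * ((∫ u in Ioo (0:ℝ) 1, c' * u ^ (-(2/α)) / (1 + c' * u))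
        - ∫ u in Ioo (0:ℝ) 1, c * u ^ (-(2/α)) / (1 + c * u))
      ≤ 2 / α * ((c' - c) * ∫ u in Ioo (0:ℝ) 1, u ^ (-(2/α))) := by
        apply mul_le_mul_of_nonneg_left _ hδ.le
        rw [hint, ← heq]; exact hle
    _ = 2/α * (∫ u in Ioo (0:ℝ) 1, u ^ (-(2/α))) * (c' - c) := by ring

lemma Afun_contOn (hα : 2 < α) : ContinuousOn (Afun α) (Ioi (0:ℝ)) := by
  set K : ℝ := 2/α * (∫ u in Ioo (0:ℝ) 1, u ^ (-(2/α))) with hK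
  apply LipschitzOnWith.continuousOn (K := Real.toNNReal K)
  apply LipschitzOnWith.of_dist_le_mul
  intro x hx y hy
  rcases le_total y x with h | h
  · have hb := Afun_lip hα hy h
    have hmono : Afun α y ≤ Afun α x := by
      rcases eq_or_lt_of_le h with rfl | h'
      · exact le_rfl
      · exact (Afun_strictMono hα hy h').le
    rw [Real.dist_eq, Real.dist_eq, abs_of_nonneg (by linarith), abs_of_nonneg (by linarith)]
    calc Afun α x - Afun α y ≤ K * (x - y) := hb
      _ ≤ (Real.toNNReal K : ℝ) * (x - y) := by
          apply mul_le_mul_of_nonneg_right (Real.le_coe_toNNReal K) (by linarith)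
  · have hb := Afun_lip hα hx h
    have hmono : Afun α x ≤ Afun α y := by
      rcases eq_or_lt_of_le h with rfl | h'
      · exact le_rfl
      · exact (Afun_strictMono hα hx h').le
    rw [Real.dist_eq, Real.dist_eq, abs_of_nonpos (by linarith), abs_of_nonpos (by linarith)]
    calc -(Afun α x - Afun α y) = Afun α y - Afun α x := by ring
      _ ≤ K * (y - x) := hb
      _ ≤ (Real.toNNReal K : ℝ) * -(x - y) := by
          have : -(x-y) = y - x := by ring
          rw [this]
          apply mul_le_mul_of_nonneg_right (Real.le_coe_toNNReal K) (by linarith)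

end Aux

/-- Two-user downlink NOMA power optimization (problem P1, no latency constraints): if
`θ < c* min{1/2, 1/(1+θ)}`, then the feasible set
`S = {β₁ : θ/c* < β₁ < min{1/2, 1/(1+θ)}}` is nonempty, the objective `M` is strictly
decreasing on `S`, and `sup_{β₁ ∈ S} M(β₁) = M(θ/c*)`; i.e., the optimal power allocation is
`β₁* = θ/c*` (and `β₂* = 1 - β₁*`). -/
theorem optimal_power_two_user_noma_P1
    (α θ cstar : ℝ) (hα : 2 < α) (hθ : 0 < θ) (hc : 0 < cstar)
    (hfeas : θ < cstar * min (1 / 2) (1 / (1 + θ))) :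
    ({β1 : ℝ | θ / cstar < β1 ∧ β1 < min (1 / 2) (1 / (1 + θ))}).Nonempty ∧
      StrictAntiOn (M2fun α θ)
        {β1 : ℝ | θ / cstar < β1 ∧ β1 < min (1 / 2) (1 / (1 + θ))} ∧
      sSup (M2fun α θ '' {β1 : ℝ | θ / cstar < β1 ∧ β1 < min (1 / 2) (1 / (1 + θ))}) =
        M2fun α θ (θ / cstar) := by
  have hθ1 : (0:ℝ) < 1 + θ := by linarith
  set m : ℝ := min (1/2) (1/(1+θ)) with hm
  set a : ℝ := θ / cstar with ha
  have hSeq : {β1 : ℝ | a < β1 ∧ β1 < m} = Ioo a m := rfl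
  have ham : a < m := by rw [ha, div_lt_iff₀ hc]; linarith [hfeas]
  have ha_pos : 0 < a := div_pos hθ hc
  have hlt1 : ∀ β ∈ Ico a m, β * (1 + θ) < 1 := by
    intro β hβ
    have h1 : β < 1/(1+θ) := lt_of_lt_of_le hβ.2 (min_le_right _ _)
    calc β * (1+θ) < (1/(1+θ)) * (1+θ) := mul_lt_mul_of_pos_right h1 hθ1
      _ = 1 := by field_simp
  have hc2pos : ∀ β ∈ Ico a m, 0 < c2fun θ β := by
    intro β hβ
    exact div_pos hθ (by linarith [hlt1 β hβ])
  have hc2mono : ∀ β ∈ Ico a m, ∀ β' ∈ Ico a m, β < β' → c2fun θ β < c2fun θ β' := by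
    intro β hβ β' hβ' hbb
    unfold c2fun
    apply div_lt_div_of_pos_left hθ (by linarith [hlt1 β' hβ'])
    nlinarith
  have hanti : StrictAntiOn (M2fun α θ) (Ico a m) := by
    intro β hβ β' hβ' hbb
    have hA : Afun α (c2fun θ β) < Afun α (c2fun θ β') :=
      Afun_strictMono hα (hc2pos β hβ) (hc2mono β hβ β' hβ' hbb)
    have hA0 : 0 ≤ Afun α (c2fun θ β) := Afun_nonneg hα (hc2pos β hβ).le
    have hA0' : 0 ≤ Afun α (c2fun θ β') := Afun_nonneg hα (hc2pos β' hβ').le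
    unfold M2fun
    apply div_lt_div_of_pos_left two_pos (by nlinarith) (by nlinarith)
  have haIco : a ∈ Ico a m := ⟨le_rfl, ham⟩
  -- continuity of M2fun at a
  have hc2a_pos : 0 < c2fun θ a := hc2pos a haIco
  have hcontc2 : ContinuousAt (c2fun θ) a := by
    apply ContinuousAt.div continuousAt_const (by fun_prop)
    have := hlt1 a haIco
    intro h; rw [sub_eq_zero] at h; nlinarith
  have hcontA : ContinuousAt (Afun α) (c2fun θ a) :=
    (Afun_contOn hα).continuousAt (Ioi_mem_nhds hc2a_pos)
  have houter : ContinuousAt (fun x : ℝ => 2/(2 + 3*x + x^2)) (Afun α (c2fun θ a)) := by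
    apply ContinuousAt.div continuousAt_const (by fun_prop)
    have hA0 : 0 ≤ Afun α (c2fun θ a) := Afun_nonneg hα hc2a_pos.le
    intro h; nlinarith
  have hcontM : ContinuousAt (M2fun α θ) a := by
    have heq : M2fun α θ = ((fun x : ℝ => 2/(2 + 3*x + x^2)) ∘ (Afun α)) ∘ (c2fun θ) := by
      funext β; simp [M2fun, Function.comp]
    rw [heq]
    exact (houter.comp hcontA).comp hcontc2
  refine ⟨?_, ?_, ?_⟩
  · rw [hSeq]; exact nonempty_Ioo.2 ham
  · rw [hSeq]; exact hanti.mono Ioo_subset_Ico_self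
  · rw [hSeq]
    have hne : (Ioo a m).Nonempty := nonempty_Ioo.2 ham
    have hub : ∀ x ∈ M2fun α θ '' Ioo a m, x ≤ M2fun α θ a := by
      rintro x ⟨β, hβ, rfl⟩
      exact (hanti haIco ⟨hβ.1.le, hβ.2⟩ hβ.1).le
    have hbdd : BddAbove (M2fun α θ '' Ioo a m) := ⟨M2fun α θ a, hub⟩
    apply le_antisymm (csSup_le (hne.image _) hub)
    haveI hnb : (nhdsWithin a (Ioo a m)).NeBot := by
      apply mem_closure_iff_nhdsWithin_neBot.1
      rw [closure_Ioo ham.ne]; exact ⟨le_rfl, ham.le⟩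
    exact le_of_tendsto (hcontM.continuousWithinAt.tendsto)
      (eventually_mem_nhdsWithin.mono
        (fun β hβ => le_csSup hbdd (mem_image_of_mem _ hβ)))
end
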